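/- Let 0 < r < 1 and let M := ([0, 1] × {0}) ∪ {(0, r), (1, r)} ⊆ ℝ², equipped with the Euclidean metric. Set x = (1, 0), y = (0, 0), u = (1, r) and v = (0, r). Then: (a) x and y are connectable (indeed the map t ↦ (t, 0) is a 1-Lipschitz curve from [0, 1] into M joining y to x); (b) every z ∈ M with ‖u − z‖ + ‖z − v‖ = ‖u − v‖ satisfies z = u or z = v; (c) ‖x − u‖ + ‖y − v‖ = 2r < 2 = ‖x − y‖ + ‖u − v‖. (Consequently, in the Lipschitz-free space over M, the molecule m_{x,y} is a Δ-point which is not a Daugavet point.) -/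

import Mathlib

/-- The point `(a, b)` of the Euclidean plane `ℝ²` (with the `ℓ₂`-norm). -/
noncomputable def pt (a b : ℝ) : WithLp 2 (ℝ × ℝ) :=
  (WithLp.equiv 2 (ℝ × ℝ)).symm (a, b)

/-- The metric space `M = ([0,1] × {0}) ∪ {(0,r), (1,r)} ⊆ ℝ²`. -/
noncomputable def Mset (r : ℝ) : Set (WithLp 2 (ℝ × ℝ)) :=
  ((fun t => pt t 0) '' Set.Icc 0 1) ∪ {pt 0 r, pt 1 r}

lemma dist_pt (a b c d : ℝ) :
    dist (pt a b) (pt c d) = Real.sqrt ((a - c) ^ 2 + (b - d) ^ 2) := by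
  rw [WithLp.prod_dist_eq_of_L2]
  simp [pt, Real.dist_eq, sq_abs]

lemma dist_pt_of_snd_eq (a c b : ℝ) : dist (pt a b) (pt c b) = |a - c| := by
  simp [dist_pt, Real.sqrt_sq_eq_abs]

lemma dist_pt_of_fst_eq (a b d : ℝ) : dist (pt a b) (pt a d) = |b - d| := by
  simp [dist_pt, Real.sqrt_sq_eq_abs]

lemma abs_sub_lt_dist_pt (a c : ℝ) {b d : ℝ} (hbd : b ≠ d) :
    |a - c| < dist (pt a b) (pt c d) := by
  rw [dist_pt, ← Real.sqrt_sq_eq_abs]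
  exact Real.sqrt_lt_sqrt (sq_nonneg _) (by simpa using sq_pos_of_ne_zero (sub_ne_zero.2 hbd))

lemma isometry_pt_zero : Isometry fun t : ℝ => pt t 0 :=
  Isometry.of_dist_eq fun s t => by rw [dist_pt_of_snd_eq, Real.dist_eq]

lemma lipschitzWith_pt_min_one_zero : LipschitzWith 1 fun t : ℝ => pt (min t 1) 0 := by
  simpa only [mul_one, Function.comp_def, id_eq] using
    isometry_pt_zero.lipschitz.comp (LipschitzWith.id.min_const 1)

lemma pt_min_one_zero_mem_Mset (r : ℝ) {t : ℝ} (ht : 0 ≤ t) : pt (min t 1) 0 ∈ Mset r :=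
  Or.inl ⟨min t 1, ⟨le_min ht zero_le_one, min_le_right _ _⟩, rfl⟩

/-- A point `(t, 0)` is excluded because its distances to `(1, r)` and `(0, r)` strictly exceed
`|1 - t|` and `|t|`, which already sum to at least `1`. -/
lemma eq_or_eq_of_mem_Mset_of_dist_add_dist_eq {r : ℝ} (hr : r ≠ 0) {z : WithLp 2 (ℝ × ℝ)}
    (hz : z ∈ Mset r) (hsum : dist (pt 1 r) z + dist z (pt 0 r) = dist (pt 1 r) (pt 0 r)) :
    z = pt 1 r ∨ z = pt 0 r := by
  rcases hz with ⟨t, -, rfl⟩ | hz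
  · have hright := abs_sub_lt_dist_pt 1 t hr
    have hleft := abs_sub_lt_dist_pt t 0 hr.symm
    have htriangle : (1 : ℝ) ≤ |1 - t| + |t - 0| := by
      simpa using abs_add_le (1 - t) t
    rw [dist_pt_of_snd_eq] at hsum
    norm_num at hsum
    linarith
  · rcases hz with rfl | rfl
    · exact Or.inr rfl
    · exact Or.inl rfl

/-- With `x = (1,0)`, `y = (0,0)`, `u = (1,r)`, `v = (0,r)`:
(a) `x` and `y` are connectable in `M`;
(b) the metric segment from `u` to `v` in `M` is `{u, v}`;
(c) `‖x-u‖ + ‖y-v‖ = 2r < 2 = ‖x-y‖ + ‖u-v‖`.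
Hence `m_{x,y}` is a Δ-point of `F(M)` which is not a Daugavet point. -/
theorem delta_not_daugavet_example (r : ℝ) (hr0 : 0 < r) (hr1 : r < 1) :
    (∀ ε : ℝ, 0 < ε → ∃ γ : ℝ → WithLp 2 (ℝ × ℝ),
      LipschitzOnWith 1 γ (Set.Icc 0 (dist (pt 1 0) (pt 0 0) + ε)) ∧
      (∀ t ∈ Set.Icc (0 : ℝ) (dist (pt 1 0) (pt 0 0) + ε), γ t ∈ Mset r) ∧
      γ 0 = pt 0 0 ∧ γ (dist (pt 1 0) (pt 0 0) + ε) = pt 1 0) ∧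
    (∀ z ∈ Mset r, dist (pt 1 r) z + dist z (pt 0 r) = dist (pt 1 r) (pt 0 r) →
      z = pt 1 r ∨ z = pt 0 r) ∧
    (dist (pt 1 0) (pt 1 r) + dist (pt 0 0) (pt 0 r) = 2 * r ∧ 2 * r < 2 ∧
      dist (pt 1 0) (pt 0 0) + dist (pt 1 r) (pt 0 r) = 2) := by
  have hxy : dist (pt 1 0) (pt 0 0) = 1 := by norm_num [dist_pt_of_snd_eq]
  have huv : dist (pt 1 r) (pt 0 r) = 1 := by norm_num [dist_pt_of_snd_eq]
  have hxu : dist (pt 1 0) (pt 1 r) = r := by simp [dist_pt_of_fst_eq, hr0.le]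
  have hyv : dist (pt 0 0) (pt 0 r) = r := by simp [dist_pt_of_fst_eq, hr0.le]
  refine ⟨fun ε hε => ?_, fun z hz => eq_or_eq_of_mem_Mset_of_dist_add_dist_eq hr0.ne' hz,
    by rw [hxu, hyv]; ring, by linarith, by rw [hxy, huv]; norm_num⟩
  refine ⟨fun t => pt (min t 1) 0, lipschitzWith_pt_min_one_zero.lipschitzOnWith,
    fun t ht => pt_min_one_zero_mem_Mset r ht.1, by norm_num, ?_⟩
  rw [hxy]
  exact congrArg (pt · 0) (min_eq_right (by linarith))
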